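/- arXiv:math/0404060 — 5 statements merged into one kernel-verified Lean document; each statement's English description precedes it below -/
import Mathlib

section
/- Let V = ℝ^{2m̄} with orthonormal basis {e₁,…,e_{m̄}, f₁,…,f_{m̄}}, and for each i let Ψᵢ be the symmetric bilinear form whose only nonzero components are Ψᵢ(eᵢ,eᵢ) = Ψᵢ(fᵢ,fᵢ) = 1. Set A = Σᵢ A_{Ψᵢ}, ξ₁ = e₁+…+e_{m̄}, ξ₂ = f₁+…+f_{m̄}. Then the curvature operator R_A(ξ₁,ξ₂) satisfies R_A(ξ₁,ξ₂)eᵢ = −fᵢ and R_A(ξ₁,ξ₂)fᵢ = eᵢ for all i, and hence has rank 2m̄ (is invertible). -/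
open scoped RealInnerProductSpace BigOperators

/-- On ℝ^{2mb}, with A = Σᵢ A_{Ψᵢ}, ξ₁ = Σeᵢ, ξ₂ = Σfᵢ,
the operator R_A(ξ₁,ξ₂) maps eᵢ ↦ −fᵢ, fᵢ ↦ eᵢ and hence is invertible
(has rank 2mb). -/
theorem stmt10 (mb : ℕ)
    (e f : Fin mb → EuclideanSpace ℝ (Fin mb ⊕ Fin mb))
    (he : ∀ i, e i = EuclideanSpace.single (Sum.inl i) 1)
    (hf : ∀ i, f i = EuclideanSpace.single (Sum.inr i) 1)
    (Ψ : Fin mb → EuclideanSpace ℝ (Fin mb ⊕ Fin mb) →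
          EuclideanSpace ℝ (Fin mb ⊕ Fin mb) → ℝ)
    (hΨ : ∀ i x y, Ψ i x y =
      x (Sum.inl i) * y (Sum.inl i) + x (Sum.inr i) * y (Sum.inr i))
    (A : EuclideanSpace ℝ (Fin mb ⊕ Fin mb) → EuclideanSpace ℝ (Fin mb ⊕ Fin mb) →
         EuclideanSpace ℝ (Fin mb ⊕ Fin mb) → EuclideanSpace ℝ (Fin mb ⊕ Fin mb) → ℝ)
    (hA : ∀ x y z w, A x y z w =
      ∑ i, (Ψ i x w * Ψ i y z - Ψ i x z * Ψ i y w))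
    (ξ₁ ξ₂ : EuclideanSpace ℝ (Fin mb ⊕ Fin mb))
    (hξ₁ : ξ₁ = ∑ i, e i) (hξ₂ : ξ₂ = ∑ i, f i)
    (R : EuclideanSpace ℝ (Fin mb ⊕ Fin mb) →ₗ[ℝ] EuclideanSpace ℝ (Fin mb ⊕ Fin mb))
    (hR : ∀ z w, ⟪R z, w⟫ = A ξ₁ ξ₂ z w) :
    (∀ i, R (e i) = - f i) ∧ (∀ i, R (f i) = e i) ∧ Function.Bijective R := by
  have hsum : ∀ (v : Fin mb → EuclideanSpace ℝ (Fin mb ⊕ Fin mb)) a,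
      (∑ i, v i) a = ∑ i, v i a := by
    intro v a
    induction (Finset.univ : Finset (Fin mb)) using Finset.induction with
    | empty => rfl
    | insert _ _ h ih => simp_all [Finset.sum_insert h]
  have hξ1l : ∀ j, ξ₁ (Sum.inl j) = 1 := by
    intro j
    rw [hξ₁, hsum]
    simp [he, EuclideanSpace.single_apply]
  have hξ1r : ∀ j, ξ₁ (Sum.inr j) = 0 := by
    intro j
    rw [hξ₁, hsum]
    simp [he, EuclideanSpace.single_apply]
  have hξ2l : ∀ j, ξ₂ (Sum.inl j) = 0 := by
    intro j
    rw [hξ₂, hsum]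
    simp [hf, EuclideanSpace.single_apply]
  have hξ2r : ∀ j, ξ₂ (Sum.inr j) = 1 := by
    intro j
    rw [hξ₂, hsum]
    simp [hf, EuclideanSpace.single_apply]
  have key : ∀ z w, A ξ₁ ξ₂ z w =
      ∑ i, (w (Sum.inl i) * z (Sum.inr i) - z (Sum.inl i) * w (Sum.inr i)) := by
    intro z w
    rw [hA]
    refine Finset.sum_congr rfl fun i _ => ?_
    rw [hΨ, hΨ, hΨ, hΨ, hξ1l, hξ1r, hξ2l, hξ2r]
    ring
  have hRe : ∀ i, R (e i) = - f i := by
    intro i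
    apply ext_inner_right ℝ
    intro w
    rw [hR, key, he i, hf i]
    rw [inner_neg_left, EuclideanSpace.inner_single_left]
    simp [EuclideanSpace.single_apply, Finset.sum_ite_eq]
  have hRf : ∀ i, R (f i) = e i := by
    intro i
    apply ext_inner_right ℝ
    intro w
    rw [hR, key, hf i, he i]
    rw [EuclideanSpace.inner_single_left]
    simp [EuclideanSpace.single_apply, Finset.sum_ite_eq]
  refine ⟨hRe, hRf, ?_⟩
  -- coordinates of R z
  have hcoord : ∀ (z : EuclideanSpace ℝ (Fin mb ⊕ Fin mb)) a, (R z) a = ⟪R z, EuclideanSpace.single a 1⟫ := by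
    intro z a
    rw [EuclideanSpace.inner_single_right]
    simp
  have hRl : ∀ z i, (R z) (Sum.inl i) = z (Sum.inr i) := by
    intro z i
    rw [hcoord, hR, key]
    simp [EuclideanSpace.single_apply, Finset.sum_ite_eq]
  have hRr : ∀ z i, (R z) (Sum.inr i) = - z (Sum.inl i) := by
    intro z i
    rw [hcoord, hR, key]
    simp [EuclideanSpace.single_apply, Finset.sum_ite_eq]
  have hRR : ∀ z, R (R z) = - z := by
    intro z
    apply ext_inner_right ℝ
    intro w
    rw [hR, key, inner_neg_left]
    have : ⟪z, w⟫ = ∑ a, z a * w a := by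
      simp [PiLp.inner_apply, RCLike.inner_apply, mul_comm]
    rw [this, Fintype.sum_sum_type]
    simp only [hRl, hRr]
    rw [neg_add, ← Finset.sum_neg_distrib, ← Finset.sum_neg_distrib,
      ← Finset.sum_add_distrib]
    exact Finset.sum_congr rfl fun i _ => by ring
  refine Function.bijective_iff_has_inverse.mpr ⟨fun z => - R z, ?_, ?_⟩
  · intro z; show -R (R z) = z; rw [hRR]; simp
  · intro z; show R (-R z) = z; rw [map_neg, hRR]; simp
end

section
/- For a vector space V of dimension m = 2m̄ or 2m̄+1, there exists an algebraic curvature tensor A on V (namely A = Σ_{i=1}^{m̄} A_{Ψᵢ} with the Ψᵢ as above) such that any representation A = Σ_{j=1}^{ν} λⱼ A_{Φⱼ} with symmetric bilinear forms Φⱼ requires ν ≥ m̄. In particular ν(m) ≥ m/2. -/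
/-!
For `A = ∑ⱼ λⱼ A_{Φⱼ}` the map `z ↦ A(ξ₁, ξ₂, z, ·)` takes values in the span of the `2ν`
functionals `Φⱼ(ξ₁, ·)`, `Φⱼ(ξ₂, ·)`, so its rank is at most `2ν`. Take a biorthogonal system
`eₖ(vₗ) = δₖₗ` of size `2m̄`, indexed by `κ ⊕ κ` as `e'ᵢ, e''ᵢ` and `v'ᵢ, v''ᵢ`, and put
`Ψᵢ = e'ᵢ ⊗ e'ᵢ + e''ᵢ ⊗ e''ᵢ`, `ξ₁ = ∑ᵢ v'ᵢ`, `ξ₂ = ∑ᵢ v''ᵢ`. For `A = ∑ᵢ A_{Ψᵢ}` the same map sends `v''ᵢ` to `e'ᵢ` and `v'ᵢ` to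
`-e''ᵢ`, so its rank is `2m̄`.
-/

open Module Submodule

section

variable {K M : Type*} [Field K] [AddCommGroup M] [Module K M]

theorem linearIndependent_of_biorthogonal {ι : Type*} [Fintype ι] [DecidableEq ι]
    {e : ι → Dual K M} {v : ι → M} (hev : ∀ k l, e k (v l) = if k = l then 1 else 0) :
    LinearIndependent K e := by
  rw [Fintype.linearIndependent_iff]
  intro g hg k
  simpa [hev] using congrArg (fun f : Dual K M => f (v k)) hg

theorem exists_biorthogonal [FiniteDimensional K M] {κ : Type*} [Fintype κ] [DecidableEq κ]
    (h : Fintype.card κ ≤ finrank K M) :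
    ∃ (e : κ → Dual K M) (v : κ → M), ∀ k l, e k (v l) = if k = l then 1 else 0 := by
  obtain ⟨f⟩ := Function.Embedding.nonempty_of_card_le (h.trans (Fintype.card_fin _).ge)
  let b := finBasis K M
  refine ⟨fun k => b.coord (f k), fun l => b (f l), fun k l => ?_⟩
  simp only [Basis.coord_apply, Basis.repr_self, Finsupp.single_apply, f.injective.eq_iff, eq_comm]

section CurvatureOperator

variable {ι : Type*} [Fintype ι]

/-- `z ↦ A(ξ₁, ξ₂, z, ·)` for `A = ∑ⱼ λⱼ A_{Φⱼ}`, i.e. `R_A(ξ₁, ξ₂)` with its index lowered. -/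
def curvatureOperator (lam : ι → K) (Φ : ι → M →ₗ[K] M →ₗ[K] K) (ξ₁ ξ₂ : M) :
    M →ₗ[K] Dual K M :=
  ∑ j, lam j • ((Φ j ξ₂).smulRight (Φ j ξ₁) - (Φ j ξ₁).smulRight (Φ j ξ₂))

theorem curvatureOperator_apply_apply (lam : ι → K) (Φ : ι → M →ₗ[K] M →ₗ[K] K)
    (ξ₁ ξ₂ z w : M) :
    curvatureOperator lam Φ ξ₁ ξ₂ z w =
      ∑ j, lam j * (Φ j ξ₁ w * Φ j ξ₂ z - Φ j ξ₁ z * Φ j ξ₂ w) := by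
  simp only [curvatureOperator, LinearMap.coe_sum, Finset.sum_apply, LinearMap.smul_apply,
    LinearMap.sub_apply, LinearMap.smulRight_apply, smul_eq_mul]
  exact Finset.sum_congr rfl fun j _ => by ring

theorem range_curvatureOperator_le (lam : ι → K) (Φ : ι → M →ₗ[K] M →ₗ[K] K) (ξ₁ ξ₂ : M) :
    LinearMap.range (curvatureOperator lam Φ ξ₁ ξ₂) ≤
      span K (Set.range (Sum.elim (fun j => Φ j ξ₁) (fun j => Φ j ξ₂))) := by
  rintro _ ⟨z, rfl⟩
  simp only [curvatureOperator, LinearMap.coe_sum, Finset.sum_apply, LinearMap.smul_apply,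
    LinearMap.sub_apply, LinearMap.smulRight_apply]
  refine sum_mem fun j _ => smul_mem _ _ (sub_mem ?_ ?_) <;> refine smul_mem _ _ (subset_span ?_)
  exacts [⟨Sum.inl j, rfl⟩, ⟨Sum.inr j, rfl⟩]

end CurvatureOperator

section PlaneForm

variable {κ : Type*}

def planeForm (e : κ ⊕ κ → Dual K M) (i : κ) : M →ₗ[K] M →ₗ[K] K :=
  (e (.inl i)).smulRight (e (.inl i)) + (e (.inr i)).smulRight (e (.inr i))

theorem planeForm_apply (e : κ ⊕ κ → Dual K M) (i : κ) (x y : M) :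
    planeForm e i x y = e (.inl i) x * e (.inl i) y + e (.inr i) x * e (.inr i) y := by
  simp [planeForm]

theorem planeForm_comm (e : κ ⊕ κ → Dual K M) (i : κ) (x y : M) :
    planeForm e i x y = planeForm e i y x := by
  simp only [planeForm_apply]; ring

variable [Fintype κ] [DecidableEq κ] {e : κ ⊕ κ → Dual K M} {v : κ ⊕ κ → M}

theorem planeForm_sum_inl (hev : ∀ k l, e k (v l) = if k = l then 1 else 0) (i : κ) :
    planeForm e i (∑ j, v (.inl j)) = e (.inl i) := by
  ext w; simp [planeForm_apply, hev]

theorem planeForm_sum_inr (hev : ∀ k l, e k (v l) = if k = l then 1 else 0) (i : κ) :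
    planeForm e i (∑ j, v (.inr j)) = e (.inr i) := by
  ext w; simp [planeForm_apply, hev]

theorem span_le_range_curvatureOperator_planeForm
    (hev : ∀ k l, e k (v l) = if k = l then 1 else 0) :
    span K (Set.range e) ≤ LinearMap.range
      (curvatureOperator 1 (planeForm e) (∑ j, v (.inl j)) (∑ j, v (.inr j))) := by
  rw [span_le]
  rintro _ ⟨k | k, rfl⟩
  · refine ⟨v (.inr k), ?_⟩
    ext w
    simp [curvatureOperator_apply_apply, planeForm_sum_inl hev, planeForm_sum_inr hev, hev]
  · refine ⟨-v (.inl k), ?_⟩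
    ext w
    simp [curvatureOperator_apply_apply, planeForm_sum_inl hev, planeForm_sum_inr hev, hev]

theorem card_le_card_of_curvatureOperator_planeForm_eq {ι : Type*} [Fintype ι]
    (hev : ∀ k l, e k (v l) = if k = l then 1 else 0) (lam : ι → K)
    (Φ : ι → M →ₗ[K] M →ₗ[K] K)
    (h : curvatureOperator 1 (planeForm e) (∑ j, v (.inl j)) (∑ j, v (.inr j)) =
      curvatureOperator lam Φ (∑ j, v (.inl j)) (∑ j, v (.inr j))) :
    Fintype.card κ ≤ Fintype.card ι := by
  have hspan := (span_le_range_curvatureOperator_planeForm hev).trans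
    (h ▸ range_curvatureOperator_le lam Φ _ _)
  have : FiniteDimensional K (span K (Set.range (Sum.elim
      (fun i => Φ i (∑ j, v (.inl j))) (fun i => Φ i (∑ j, v (.inr j)))))) :=
    FiniteDimensional.span_of_finite K (Set.finite_range _)
  have hrank := (finrank_mono hspan).trans (finrank_range_le_card _)
  rw [finrank_span_eq_card (linearIndependent_of_biorthogonal hev)] at hrank
  simp only [Fintype.card_sum] at hrank
  omega

end PlaneForm

end

/-- If dim V = m with m = 2mb or m = 2mb+1, there is an algebraic
curvature tensor A (a sum of mb tensors A_{Ψᵢ}) such that every representation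
A = Σ_{j=1}^{ν} λⱼ A_{Φⱼ} with symmetric bilinear forms Φⱼ requires ν ≥ mb;
hence ν(m) ≥ m/2. -/
theorem stmt12 (V : Type*) [NormedAddCommGroup V] [InnerProductSpace ℝ V]
    [FiniteDimensional ℝ V] (m mb : ℕ)
    (hdim : Module.finrank ℝ V = m) (hm : m = 2 * mb ∨ m = 2 * mb + 1) :
    ∃ A : V → V → V → V → ℝ,
      (∃ Ψ : Fin mb → V →ₗ[ℝ] V →ₗ[ℝ] ℝ,
        (∀ i x y, Ψ i x y = Ψ i y x) ∧
        ∀ x y z w, A x y z w =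
          ∑ i, (Ψ i x w * Ψ i y z - Ψ i x z * Ψ i y w)) ∧
      ∀ (ν : ℕ) (lam : Fin ν → ℝ) (Φ : Fin ν → V →ₗ[ℝ] V →ₗ[ℝ] ℝ),
        (∀ j x y, Φ j x y = Φ j y x) →
        (∀ x y z w, A x y z w =
          ∑ j, lam j * (Φ j x w * Φ j y z - Φ j x z * Φ j y w)) →
        mb ≤ ν := by
  obtain ⟨e, v, hev⟩ := exists_biorthogonal (K := ℝ) (M := V) (κ := Fin mb ⊕ Fin mb)
    (by simp only [Fintype.card_sum, Fintype.card_fin]; omega)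
  let Ψ := planeForm e
  refine ⟨fun x y z w => ∑ i, (Ψ i x w * Ψ i y z - Ψ i x z * Ψ i y w),
    ⟨Ψ, planeForm_comm e, fun _ _ _ _ => rfl⟩, fun ν lam Φ _ hrep => ?_⟩
  have hop : curvatureOperator 1 Ψ (∑ j, v (.inl j)) (∑ j, v (.inr j)) =
      curvatureOperator lam Φ (∑ j, v (.inl j)) (∑ j, v (.inr j)) :=
    LinearMap.ext₂ fun z w => by
      simpa [curvatureOperator_apply_apply] using hrep (∑ j, v (.inl j)) (∑ j, v (.inr j)) z w
  simpa using card_le_card_of_curvatureOperator_planeForm_eq hev lam Φ hop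
end

section
/- Let A be an algebraic curvature tensor on ℝ^m (with components A_{ijkl} satisfying the curvature symmetries) and define g_{ik}(x) = ⟨eᵢ,eₖ⟩ − (1/3)Σ_{j,l} A_{ijlk} xⱼxₗ. Then 2-jet combination ½{∂ᵢ∂ₖg_{jl} + ∂ⱼ∂ₗg_{ik} − ∂ᵢ∂ₗg_{jk} − ∂ⱼ∂ₖg_{il}}(0) equals A_{ijkl}; i.e., the curvature of g at the origin realizes A. -/
open scoped BigOperators

/-- The partial derivative in the `i`-th coordinate direction of a function
on ℝ^m. -/
noncomputable def pd {m : ℕ} (i : Fin m) (h : (Fin m → ℝ) → ℝ) :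
    (Fin m → ℝ) → ℝ :=
  fun x => fderiv ℝ h x (Pi.single i 1)


section aux
variable {m : ℕ}

lemma hasFDeriv_quad (c : Fin m → Fin m → ℝ) (x : Fin m → ℝ) :
    HasFDerivAt (fun x : Fin m → ℝ => ∑ p, ∑ q, c p q * x p * x q)
      (∑ p, ∑ q, ((c p q * x p) • (ContinuousLinearMap.proj q : (Fin m → ℝ) →L[ℝ] ℝ)
        + x q • (c p q • (ContinuousLinearMap.proj p : (Fin m → ℝ) →L[ℝ] ℝ)))) x := by
  apply HasFDerivAt.fun_sum
  intro p _
  apply HasFDerivAt.fun_sum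
  intro q _
  exact (((ContinuousLinearMap.proj p : (Fin m → ℝ) →L[ℝ] ℝ).hasFDerivAt.const_mul (c p q)).mul
    (ContinuousLinearMap.proj q : (Fin m → ℝ) →L[ℝ] ℝ).hasFDerivAt)

lemma pd_quad (c : Fin m → Fin m → ℝ) (k : Fin m) (e : ℝ) :
    pd k (fun x => e - (1/3) * ∑ p, ∑ q, c p q * x p * x q) =
      fun x => -(1/3) * (∑ p, c p k * x p + ∑ q, c k q * x q) := by
  funext x
  have h := ((hasFDeriv_quad c x).const_mul (1/3 : ℝ)).const_sub e
  rw [pd, h.fderiv]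
  simp [ContinuousLinearMap.sum_apply, Pi.single_apply]
  rw [Finset.sum_comm]
  simp [Finset.sum_add_distrib, Finset.sum_ite_eq, Finset.sum_ite_eq', mul_comm, add_comm]

lemma pd_lin (c : Fin m → Fin m → ℝ) (k i : Fin m) (x : Fin m → ℝ) :
    pd i (fun x => -(1/3) * (∑ p, c p k * x p + ∑ q, c k q * x q)) x
      = -(1/3) * (c i k + c k i) := by
  have h : HasFDerivAt (fun x : Fin m → ℝ => -(1/3) * (∑ p, c p k * x p + ∑ q, c k q * x q))
      ((-(1/3) : ℝ) • ((∑ p, c p k • (ContinuousLinearMap.proj p : (Fin m → ℝ) →L[ℝ] ℝ))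
        + ∑ q, c k q • (ContinuousLinearMap.proj q : (Fin m → ℝ) →L[ℝ] ℝ))) x := by
    apply HasFDerivAt.const_mul
    exact (HasFDerivAt.fun_sum (fun p _ =>
        (ContinuousLinearMap.proj p : (Fin m → ℝ) →L[ℝ] ℝ).hasFDerivAt.const_mul (c p k))).add
      (HasFDerivAt.fun_sum (fun q _ =>
        (ContinuousLinearMap.proj q : (Fin m → ℝ) →L[ℝ] ℝ).hasFDerivAt.const_mul (c k q)))
  rw [pd, h.fderiv]
  simp [ContinuousLinearMap.sum_apply, Pi.single_apply, Finset.sum_ite_eq, Finset.sum_ite_eq']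
  ring

lemma pd2 (c : Fin m → Fin m → ℝ) (e : ℝ) (i k : Fin m) :
    pd i (pd k (fun x => e - (1/3) * ∑ p, ∑ q, c p q * x p * x q)) 0
      = -(1/3) * (c i k + c k i) := by
  rw [pd_quad, pd_lin]

end aux

/-- For an algebraic curvature tensor A and the metric
g_{ik}(x) = ⟨eᵢ,eₖ⟩ − (1/3)Σ_{j,l} A_{ijlk} xⱼxₗ, the 2-jet combination
½{∂ᵢ∂ₖg_{jl} + ∂ⱼ∂ₗg_{ik} − ∂ᵢ∂ₗg_{jk} − ∂ⱼ∂ₖg_{il}}(0) equals A_{ijkl}. -/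
theorem stmt16 (m : ℕ) (A : Fin m → Fin m → Fin m → Fin m → ℝ)
    (hA1 : ∀ i j k l, A i j k l = - A j i k l)
    (hA2 : ∀ i j k l, A i j k l = A k l i j)
    (hA3 : ∀ i j k l, A i j k l + A j k i l + A k i j l = 0)
    (η : Fin m → Fin m → ℝ)
    (g : Fin m → Fin m → (Fin m → ℝ) → ℝ)
    (hg : ∀ i k x, g i k x =
      η i k - (1 / 3) * ∑ j, ∑ l, A i j l k * x j * x l)
    (i j k l : Fin m) :
    (pd i (pd k (g j l)) 0 + pd j (pd l (g i k)) 0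
      - pd i (pd l (g j k)) 0 - pd j (pd k (g i l)) 0) / 2 = A i j k l := by
  have hge : ∀ a b, g a b = fun x => η a b - (1/3) * ∑ p, ∑ q, (fun p q => A a p q b) p q * x p * x q :=
    fun a b => funext (hg a b)
  rw [hge j l, hge i k, hge j k, hge i l, pd2, pd2, pd2, pd2]
  have e1 := hA1 i j k l
  have e2 := hA1 i j l k
  have e3 := hA1 i k j l
  have e4 := hA2 i l j k
  have e5 := hA2 j l i k
  have e6 := hA2 i j l k
  have e7 := hA1 l k i j
  have e8 := hA2 k l i j
  have e9 := hA3 i j k l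
  linarith
end

section
/- Let A₁ be an algebraic covariant derivative curvature tensor on ℝ^m (components A_{1,ijkl;n} with the symmetries of ∇R) and define g_{ik}(x) = ⟨eᵢ,eₖ⟩ − (1/6)Σ_{j,l,n} A_{1,ijlk;n} xⱼxₗxₙ. Then ½{∂ᵢ∂ₖ∂ₙg_{jl} + ∂ⱼ∂ₗ∂ₙg_{ik} − ∂ᵢ∂ₗ∂ₙg_{jk} − ∂ⱼ∂ₖ∂ₙg_{il}}(0) = A_{1,ijkl;n}; i.e., the covariant derivative of the curvature of g at the origin realizes A₁. -/
open scoped BigOperators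

lemma pd_of_hasFDerivAt {m : ℕ} {f : (Fin m → ℝ) → ℝ}
    {L : (Fin m → ℝ) →L[ℝ] ℝ} {x : Fin m → ℝ} (h : HasFDerivAt f L x) (a : Fin m) :
    pd a f x = L (Pi.single a 1) := by
  rw [pd, h.fderiv]

noncomputable def prj {m : ℕ} (p : Fin m) : (Fin m → ℝ) →L[ℝ] ℝ :=
  ContinuousLinearMap.proj p

lemma prj_hasFDerivAt {m : ℕ} (p : Fin m) (x : Fin m → ℝ) :
    HasFDerivAt (fun x : Fin m → ℝ => x p) (prj p) x :=
  (prj p).hasFDerivAt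

@[simp] lemma prj_apply {m : ℕ} (p : Fin m) (v : Fin m → ℝ) : prj p v = v p := rfl

lemma pd_F1 {m : ℕ} (b : Fin m → ℝ) (a : Fin m) (x : Fin m → ℝ) :
    pd a (fun x => -(1/6 : ℝ) * ∑ p, b p * x p) x = -(1/6) * b a := by
  have h : HasFDerivAt (fun x : Fin m → ℝ => ∑ p, b p * x p)
      (∑ p, b p • prj p) x :=
    HasFDerivAt.fun_sum fun p _ => (prj_hasFDerivAt p x).const_mul (b p)
  rw [pd_of_hasFDerivAt (h.const_mul (-(1/6))) a]
  simp [ContinuousLinearMap.sum_apply, Pi.single_apply, Finset.sum_ite_eq, mul_ite]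

lemma pd_F2 {m : ℕ} (d : Fin m → Fin m → ℝ) (a : Fin m) (x : Fin m → ℝ) :
    pd a (fun x => -(1/6 : ℝ) * ∑ p, ∑ q, d p q * x p * x q) x
      = -(1/6) * ∑ p, (d a p + d p a) * x p := by
  have h : HasFDerivAt (fun x : Fin m → ℝ => ∑ p, ∑ q, d p q * x p * x q)
      (∑ p, ∑ q, ((d p q * x p) • prj q + x q • (d p q • prj p))) x :=
    HasFDerivAt.fun_sum fun p _ => HasFDerivAt.fun_sum fun q _ =>
      ((prj_hasFDerivAt p x).const_mul (d p q)).mul (prj_hasFDerivAt q x)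
  rw [pd_of_hasFDerivAt (h.const_mul (-(1/6))) a]
  simp [ContinuousLinearMap.sum_apply, Pi.single_apply, Finset.sum_ite_eq,
    Finset.sum_ite_eq', mul_ite, ite_mul, Finset.sum_add_distrib, Finset.mul_sum,
    add_mul, mul_comm, mul_assoc, mul_left_comm]
  rw [← Finset.sum_neg_distrib, ← Finset.sum_neg_distrib, ← Finset.sum_neg_distrib,
      ← Finset.sum_add_distrib]
  exact Finset.sum_congr rfl fun p _ => by ring


lemma pd_F3 {m : ℕ} (e : ℝ) (c : Fin m → Fin m → Fin m → ℝ) (a : Fin m) (x : Fin m → ℝ) :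
    pd a (fun x => e - (1/6 : ℝ) * ∑ p, ∑ q, ∑ r, c p q r * x p * x q * x r) x
      = -(1/6) * ∑ p, ∑ q, (c a p q + c p a q + c p q a) * x p * x q := by
  have h : HasFDerivAt (fun x : Fin m → ℝ => ∑ p, ∑ q, ∑ r, c p q r * x p * x q * x r)
      (∑ p, ∑ q, ∑ r, ((c p q r * x p * x q) • prj r
        + x r • ((c p q r * x p) • prj q + x q • (c p q r • prj p)))) x :=
    HasFDerivAt.fun_sum fun p _ => HasFDerivAt.fun_sum fun q _ => HasFDerivAt.fun_sum fun r _ =>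
      (((prj_hasFDerivAt p x).const_mul (c p q r)).mul (prj_hasFDerivAt q x)).mul
        (prj_hasFDerivAt r x)
  have h2 : HasFDerivAt (fun x : Fin m → ℝ =>
      e - (1/6 : ℝ) * ∑ p, ∑ q, ∑ r, c p q r * x p * x q * x r)
      ((0 : (Fin m → ℝ) →L[ℝ] ℝ) - (1/6 : ℝ) • (∑ p, ∑ q, ∑ r, ((c p q r * x p * x q) • prj r
        + x r • ((c p q r * x p) • prj q + x q • (c p q r • prj p))))) x :=
    (hasFDerivAt_const e x).sub (h.const_mul (1/6))
  rw [pd_of_hasFDerivAt h2 a]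
  simp [ContinuousLinearMap.sum_apply, Pi.single_apply, Finset.sum_ite_eq,
    Finset.sum_ite_eq', mul_ite, ite_mul, Finset.sum_add_distrib, Finset.mul_sum,
    add_mul, mul_comm, mul_assoc, mul_left_comm]
  rw [← Finset.sum_neg_distrib, ← Finset.sum_neg_distrib, ← Finset.sum_neg_distrib,
      ← Finset.sum_neg_distrib, ← Finset.sum_add_distrib, ← Finset.sum_add_distrib]
  refine Finset.sum_congr rfl fun p _ => ?_
  rw [← Finset.sum_neg_distrib, ← Finset.sum_neg_distrib, ← Finset.sum_neg_distrib,
      ← Finset.sum_neg_distrib, ← Finset.sum_add_distrib, ← Finset.sum_add_distrib]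
  exact Finset.sum_congr rfl fun q _ => by ring


lemma pd3 {m : ℕ} (e : ℝ) (c : Fin m → Fin m → Fin m → ℝ) (a b d : Fin m)
    (f : (Fin m → ℝ) → ℝ)
    (hf : ∀ x, f x = e - (1/6 : ℝ) * ∑ p, ∑ q, ∑ r, c p q r * x p * x q * x r) :
    pd a (pd b (pd d f)) 0
      = -(1/6) * (c a b d + c a d b + c b a d + c b d a + c d a b + c d b a) := by
  have hf' : f = fun x => e - (1/6 : ℝ) * ∑ p, ∑ q, ∑ r, c p q r * x p * x q * x r :=
    funext hf
  have h1 : pd d f = fun x =>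
      -(1/6 : ℝ) * ∑ p, ∑ q, (c d p q + c p d q + c p q d) * x p * x q := by
    funext x; rw [hf']; exact pd_F3 e c d x
  have h2 : pd b (pd d f) = fun x =>
      -(1/6 : ℝ) * ∑ p, ((c d b p + c b d p + c b p d) + (c d p b + c p d b + c p b d)) * x p := by
    funext x; rw [h1]; exact pd_F2 _ b x
  rw [h2, pd_F1]
  ring

/-- For an algebraic covariant derivative curvature tensor A₁
and the metric g_{ik}(x) = ⟨eᵢ,eₖ⟩ − (1/6)Σ_{j,l,n} A_{1,ijlk;n} xⱼxₗxₙ, the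
3-jet combination ½{∂ᵢ∂ₖ∂ₙg_{jl} + ∂ⱼ∂ₗ∂ₙg_{ik} − ∂ᵢ∂ₗ∂ₙg_{jk} − ∂ⱼ∂ₖ∂ₙg_{il}}(0)
equals A_{1,ijkl;n}. -/
theorem stmt17 (m : ℕ) (A₁ : Fin m → Fin m → Fin m → Fin m → Fin m → ℝ)
    (hA1 : ∀ i j k l n, A₁ i j k l n = - A₁ j i k l n)
    (hA2 : ∀ i j k l n, A₁ i j k l n = A₁ k l i j n)
    (hA3 : ∀ i j k l n, A₁ i j k l n + A₁ j k i l n + A₁ k i j l n = 0)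
    (hA4 : ∀ i j k l n, A₁ i j k l n + A₁ i j l n k + A₁ i j n k l = 0)
    (η : Fin m → Fin m → ℝ)
    (g : Fin m → Fin m → (Fin m → ℝ) → ℝ)
    (hg : ∀ i k x, g i k x =
      η i k - (1 / 6) * ∑ j, ∑ l, ∑ n, A₁ i j l k n * x j * x l * x n)
    (i j k l n : Fin m) :
    (pd i (pd k (pd n (g j l))) 0 + pd j (pd l (pd n (g i k))) 0
      - pd i (pd l (pd n (g j k))) 0 - pd j (pd k (pd n (g i l))) 0) / 2
      = A₁ i j k l n := by
  rw [pd3 (η j l) (fun p q r => A₁ j p q l r) i k n (g j l) (fun x => hg j l x),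
      pd3 (η i k) (fun p q r => A₁ i p q k r) j l n (g i k) (fun x => hg i k x),
      pd3 (η j k) (fun p q r => A₁ j p q k r) i l n (g j k) (fun x => hg j k x),
      pd3 (η i l) (fun p q r => A₁ i p q l r) j k n (g i l) (fun x => hg i l x)]
  linear_combination
      (-1/12 : ℝ) * (hA1 i j k l n) +
      (-1/6 : ℝ) * (hA2 i j k l n) +
      (-1/6 : ℝ) * (hA2 i j k n l) +
      (1/12 : ℝ) * (hA1 i j l k n) +
      (-1/6 : ℝ) * (hA2 i j l k n) +
      (1/6 : ℝ) * (hA2 i j l n k) +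
      (1/12 : ℝ) * (hA1 i j n k l) +
      (-1/6 : ℝ) * (hA2 i j n k l) +
      (-1/12 : ℝ) * (hA1 i j n l k) +
      (1/6 : ℝ) * (hA2 i j n l k) +
      (2/3 : ℝ) * (hA1 i k j l n) +
      (-1/3 : ℝ) * (hA2 i k j l n) +
      (-1/6 : ℝ) * (hA1 i k j n l) +
      (1/6 : ℝ) * (hA2 i k j n l) +
      (1/12 : ℝ) * (hA2 i k l n j) +
      (1/4 : ℝ) * (hA2 i k n j l) +
      (1/12 : ℝ) * (hA2 i k n l j) +
      (-1/3 : ℝ) * (hA2 i l j k n) +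
      (1/6 : ℝ) * (hA1 i l j n k) +
      (-1/6 : ℝ) * (hA2 i l j n k) +
      (-1/6 : ℝ) * (hA1 i l k n j) +
      (-1/12 : ℝ) * (hA2 i l k n j) +
      (-1/4 : ℝ) * (hA2 i l n j k) +
      (-1/12 : ℝ) * (hA2 i l n k j) +
      (-1/4 : ℝ) * (hA1 i n j k l) +
      (1/6 : ℝ) * (hA2 i n j k l) +
      (1/4 : ℝ) * (hA1 i n j l k) +
      (-1/6 : ℝ) * (hA2 i n j l k) +
      (1/12 : ℝ) * (hA2 i n k l j) +
      (-1/12 : ℝ) * (hA2 i n l k j) +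
      (-1/12 : ℝ) * (hA2 j k l n i) +
      (-1/4 : ℝ) * (hA2 j k n i l) +
      (-1/12 : ℝ) * (hA2 j k n l i) +
      (1/6 : ℝ) * (hA1 j l k n i) +
      (1/12 : ℝ) * (hA2 j l k n i) +
      (1/4 : ℝ) * (hA2 j l n i k) +
      (1/12 : ℝ) * (hA2 j l n k i) +
      (1/4 : ℝ) * (hA1 j n i k l) +
      (-1/4 : ℝ) * (hA1 j n i l k) +
      (-1/12 : ℝ) * (hA2 j n k l i) +
      (1/12 : ℝ) * (hA2 j n l k i) +
      (-1/6 : ℝ) * (hA1 k l i j n) +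
      (-1/12 : ℝ) * (hA1 k l i n j) +
      (1/12 : ℝ) * (hA1 k l j n i) +
      (-1/6 : ℝ) * (hA1 k n i j l) +
      (-1/12 : ℝ) * (hA1 k n i l j) +
      (1/12 : ℝ) * (hA1 k n j l i) +
      (1/6 : ℝ) * (hA1 l n i j k) +
      (1/12 : ℝ) * (hA1 l n i k j) +
      (-1/12 : ℝ) * (hA1 l n j k i) +
      (-2/3 : ℝ) * (hA3 i j k l n) +
      (1/6 : ℝ) * (hA3 i j k n l) +
      (-1/6 : ℝ) * (hA3 i j l n k) +
      (1/6 : ℝ) * (hA3 i k l n j) +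
      (-1/6 : ℝ) * (hA3 j k l n i) +
      (-1/4 : ℝ) * (hA4 i k j l n) +
      (1/4 : ℝ) * (hA4 i l j k n) +
      (1/4 : ℝ) * (hA4 j k i l n) +
      (-1/4 : ℝ) * (hA4 j l i k n)
end

section
/- With the induced metric g_{ij} = δ_{ij} + Σ_σ ∂ᵢf_σ ∂ⱼf_σ as above, and Ψ^σ_{ij} := ∂ᵢ∂ⱼf_σ(0), Ψ^σ_{ijk} := ∂ᵢ∂ⱼ∂ₖf_σ(0), the covariant derivative of the curvature at 0 satisfies R_{ijkl;n}(0) = Σ_σ {Ψ^σ_{iln}Ψ^σ_{jk} + Ψ^σ_{jkn}Ψ^σ_{il} − Ψ^σ_{ikn}Ψ^σ_{jl} − Ψ^σ_{ik}Ψ^σ_{jln}}, i.e., ∇R(0) = Σ_σ A_{1,Ψ^σ,Ψ^σ₁}. -/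
open scoped BigOperators

lemma pd_smooth {m : ℕ} (i : Fin m) {h : (Fin m → ℝ) → ℝ} (hh : ContDiff ℝ (⊤ : ℕ∞) h) :
    ContDiff ℝ (⊤ : ℕ∞) (pd i h) :=
  (hh.fderiv_right (by simp)).clm_apply contDiff_const

lemma pd_const_add {m : ℕ} (i : Fin m) (c : ℝ) (h : (Fin m → ℝ) → ℝ) :
    pd i (fun x => c + h x) = pd i h := by
  funext x; unfold pd; rw [fderiv_const_add]

lemma pd_add {m : ℕ} (i : Fin m) {u v : (Fin m → ℝ) → ℝ} (hu : ContDiff ℝ (⊤ : ℕ∞) u)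
    (hv : ContDiff ℝ (⊤ : ℕ∞) v) (x : Fin m → ℝ) :
    pd i (fun x => u x + v x) x = pd i u x + pd i v x := by
  unfold pd
  rw [fderiv_fun_add (hu.differentiable (by simp)).differentiableAt
    (hv.differentiable (by simp)).differentiableAt]
  simp

lemma pd_mul {m : ℕ} (i : Fin m) {u v : (Fin m → ℝ) → ℝ} (hu : ContDiff ℝ (⊤ : ℕ∞) u)
    (hv : ContDiff ℝ (⊤ : ℕ∞) v) (x : Fin m → ℝ) :
    pd i (fun x => u x * v x) x = pd i u x * v x + u x * pd i v x := by
  unfold pd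
  rw [fderiv_fun_mul (hu.differentiable (by simp)).differentiableAt
    (hv.differentiable (by simp)).differentiableAt]
  simp only [ContinuousLinearMap.add_apply, ContinuousLinearMap.smul_apply, smul_eq_mul]
  ring

lemma pd_sum {m κ : ℕ} (i : Fin m) {F : Fin κ → (Fin m → ℝ) → ℝ}
    (hF : ∀ σ, ContDiff ℝ (⊤ : ℕ∞) (F σ)) (x : Fin m → ℝ) :
    pd i (fun x => ∑ σ, F σ x) x = ∑ σ, pd i (F σ) x := by
  unfold pd
  rw [fderiv_fun_sum (fun σ _ => ((hF σ).differentiable (by simp)).differentiableAt)]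
  simp

lemma pd_comm {m : ℕ} (a b : Fin m) {h : (Fin m → ℝ) → ℝ} (hh : ContDiff ℝ (⊤ : ℕ∞) h)
    (x : Fin m → ℝ) : pd a (pd b h) x = pd b (pd a h) x := by
  have hsymm : IsSymmSndFDerivAt ℝ h x :=
    hh.contDiffAt.isSymmSndFDerivAt (by rw [minSmoothness_of_isRCLikeNormedField]; exact WithTop.coe_le_coe.mpr le_top)
  have hd : ∀ c d : Fin m, pd c (pd d h) x
      = fderiv ℝ (fderiv ℝ h) x (Pi.single c 1) (Pi.single d 1) := by
    intro c d
    unfold pd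
    rw [fderiv_clm_apply ((hh.fderiv_right (m := 1) (WithTop.coe_le_coe.mpr le_top)).differentiable (by simp)).differentiableAt
      (differentiableAt_const _)]
    simp
  rw [hd a b, hd b a, hsymm.eq]

lemma pd2_mul {m : ℕ} (b c : Fin m) {u v : (Fin m → ℝ) → ℝ} (hu : ContDiff ℝ (⊤ : ℕ∞) u)
    (hv : ContDiff ℝ (⊤ : ℕ∞) v) (x : Fin m → ℝ) :
    pd b (pd c (fun x => u x * v x)) x =
      pd b (pd c u) x * v x + pd c u x * pd b v x
        + (pd b u x * pd c v x + u x * pd b (pd c v) x) := by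
  have h1 : pd c (fun x => u x * v x) = fun x => pd c u x * v x + u x * pd c v x :=
    funext (pd_mul c hu hv)
  rw [h1, pd_add b (((pd_smooth c hu).mul hv)) (hu.mul (pd_smooth c hv)) x,
    pd_mul b (pd_smooth c hu) hv x, pd_mul b hu (pd_smooth c hv) x]

lemma key {m : ℕ} (a b c : Fin m) {u v : (Fin m → ℝ) → ℝ} (hu : ContDiff ℝ (⊤ : ℕ∞) u)
    (hv : ContDiff ℝ (⊤ : ℕ∞) v) (hu0 : u 0 = 0) (hv0 : v 0 = 0) :
    pd a (pd b (pd c (fun x => u x * v x))) 0 =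
      pd b (pd c u) 0 * pd a v 0 + pd a (pd c u) 0 * pd b v 0
        + pd c u 0 * pd a (pd b v) 0 + pd a (pd b u) 0 * pd c v 0
        + pd b u 0 * pd a (pd c v) 0 + pd a u 0 * pd b (pd c v) 0 := by
  have h2 : pd b (pd c (fun x => u x * v x))
      = fun x => pd b (pd c u) x * v x + pd c u x * pd b v x
        + (pd b u x * pd c v x + u x * pd b (pd c v) x) :=
    funext (pd2_mul b c hu hv)
  have s1 : ContDiff ℝ (⊤ : ℕ∞) (pd b (pd c u)) := pd_smooth b (pd_smooth c hu)
  have s2 : ContDiff ℝ (⊤ : ℕ∞) (pd c u) := pd_smooth c hu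
  have s3 : ContDiff ℝ (⊤ : ℕ∞) (pd b v) := pd_smooth b hv
  have s4 : ContDiff ℝ (⊤ : ℕ∞) (pd b u) := pd_smooth b hu
  have s5 : ContDiff ℝ (⊤ : ℕ∞) (pd c v) := pd_smooth c hv
  have s6 : ContDiff ℝ (⊤ : ℕ∞) (pd b (pd c v)) := pd_smooth b (pd_smooth c hv)
  rw [h2, pd_add a (((s1.mul hv).add (s2.mul s3))) ((s4.mul s5).add (hu.mul s6)) 0,
    pd_add a (s1.mul hv) (s2.mul s3) 0, pd_add a (s4.mul s5) (hu.mul s6) 0,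
    pd_mul a s1 hv 0, pd_mul a s2 s3 0, pd_mul a s4 s5 0, pd_mul a hu s6 0,
    hu0, hv0]
  ring

lemma alg {m : ℕ} (S : Fin m → Fin m → ℝ) (D : Fin m → Fin m → Fin m → ℝ)
    (hS : ∀ a b, S a b = S b a)
    (h12 : ∀ a b c, D a b c = D b a c)
    (h23 : ∀ a b c, D a b c = D a c b)
    (i j k l n : Fin m) :
    ((D k n j * S i l + D i n j * S k l + S n j * D i k l + D i k j * S n l
        + S k j * D i n l + S i j * D k n l)
      + (D l n i * S j k + D j n i * S l k + S n i * D j l k + D j l i * S n k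
        + S l i * D j n k + S j i * D l n k)
      - (D l n j * S i k + D i n j * S l k + S n j * D i l k + D i l j * S n k
        + S l j * D i n k + S i j * D l n k)
      - (D k n i * S j l + D j n i * S k l + S n i * D j k l + D j k i * S n l
        + S k i * D j n l + S j i * D k n l)) / 2
    = D i l n * S j k + D j k n * S i l - D i k n * S j l - S i k * D j l n := by
  have p312 : ∀ a b c, D a b c = D c a b := fun a b c => by rw [h23, h12]
  have p132 := h23
  rw [show D k n j = D j k n from p312 k n j,
      show D i n j = D i j n from p132 i n j,
      show D i k j = D i j k from p132 i k j,
      show D i n l = D i l n from p132 i n l,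
      show D k n l = D k l n from p132 k n l,
      show D l n i = D i l n from p312 l n i,
      show D j n i = D i j n from p312 j n i,
      show D j l i = D i j l from p312 j l i,
      show D j l k = D j k l from p132 j l k,
      show D j n k = D j k n from p132 j n k,
      show D l n k = D k l n from p312 l n k,
      show D l n j = D j l n from p312 l n j,
      show D i l j = D i j l from p132 i l j,
      show D i l k = D i k l from p132 i l k,
      show D i n k = D i k n from p132 i n k,
      show D k n i = D i k n from p312 k n i,
      show D j k i = D i j k from p312 j k i,
      show D j n l = D j l n from p132 j n l,
      hS n l, hS n j, hS k j, hS l k, hS n k, hS n i, hS l i, hS j i, hS l j, hS k i]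
  ring

/-- For the induced metric g_{ij} = δ_{ij} + Σ_σ ∂ᵢf_σ ∂ⱼf_σ with
df_σ(0) = 0, Ψ^σ_{ij} = ∂ᵢ∂ⱼf_σ(0) and Ψ^σ_{ijk} = ∂ᵢ∂ⱼ∂ₖf_σ(0), the covariant
derivative of curvature R_{ijkl;n}(0) =
½{∂ᵢ∂ₖ∂ₙg_{jl} + ∂ⱼ∂ₗ∂ₙg_{ik} − ∂ᵢ∂ₗ∂ₙg_{jk} − ∂ⱼ∂ₖ∂ₙg_{il}}(0) equals
Σ_σ {Ψ^σ_{iln}Ψ^σ_{jk} + Ψ^σ_{jkn}Ψ^σ_{il} − Ψ^σ_{ikn}Ψ^σ_{jl} − Ψ^σ_{ik}Ψ^σ_{jln}},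
i.e. ∇R(0) = Σ_σ A_{1,Ψ^σ,Ψ^σ₁}. -/
theorem stmt19 (m κ : ℕ) (f : Fin κ → (Fin m → ℝ) → ℝ)
    (hf : ∀ σ, ContDiff ℝ (⊤ : ℕ∞) (f σ))
    (hdf : ∀ σ i, pd i (f σ) 0 = 0)
    (g : Fin m → Fin m → (Fin m → ℝ) → ℝ)
    (hg : ∀ i j x, g i j x =
      (if i = j then (1 : ℝ) else 0) + ∑ σ, pd i (f σ) x * pd j (f σ) x)
    (Ψ : Fin κ → Fin m → Fin m → ℝ)
    (hΨ : ∀ σ i j, Ψ σ i j = pd i (pd j (f σ)) 0)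
    (Ψ₁ : Fin κ → Fin m → Fin m → Fin m → ℝ)
    (hΨ₁ : ∀ σ i j k, Ψ₁ σ i j k = pd i (pd j (pd k (f σ))) 0)
    (i j k l n : Fin m) :
    (pd i (pd k (pd n (g j l))) 0 + pd j (pd l (pd n (g i k))) 0
      - pd i (pd l (pd n (g j k))) 0 - pd j (pd k (pd n (g i l))) 0) / 2
      = ∑ σ, (Ψ₁ σ i l n * Ψ σ j k + Ψ₁ σ j k n * Ψ σ i l
          - Ψ₁ σ i k n * Ψ σ j l - Ψ σ i k * Ψ₁ σ j l n) := by
  have g3 : ∀ a b c p q : Fin m, pd a (pd b (pd c (g p q))) 0 =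
      ∑ σ, (pd b (pd c (pd p (f σ))) 0 * pd a (pd q (f σ)) 0
        + pd a (pd c (pd p (f σ))) 0 * pd b (pd q (f σ)) 0
        + pd c (pd p (f σ)) 0 * pd a (pd b (pd q (f σ))) 0
        + pd a (pd b (pd p (f σ))) 0 * pd c (pd q (f σ)) 0
        + pd b (pd p (f σ)) 0 * pd a (pd c (pd q (f σ))) 0
        + pd a (pd p (f σ)) 0 * pd b (pd c (pd q (f σ))) 0) := by
    intro a b c p q
    have hge : g p q = fun x => (if p = q then (1 : ℝ) else 0)
        + ∑ σ, pd p (f σ) x * pd q (f σ) x := funext (hg p q)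
    have hFσ : ∀ σ : Fin κ, ContDiff ℝ (⊤ : ℕ∞) (fun x => pd p (f σ) x * pd q (f σ) x) :=
      fun σ => (pd_smooth p (hf σ)).mul (pd_smooth q (hf σ))
    have h1 : pd c (fun x => ∑ σ, pd p (f σ) x * pd q (f σ) x)
        = fun x => ∑ σ, pd c (fun y => pd p (f σ) y * pd q (f σ) y) x :=
      funext (pd_sum c hFσ)
    have h2 : pd b (fun x => ∑ σ, pd c (fun y => pd p (f σ) y * pd q (f σ) y) x)
        = fun x => ∑ σ, pd b (pd c (fun y => pd p (f σ) y * pd q (f σ) y)) x :=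
      funext (pd_sum b (fun σ => pd_smooth c (hFσ σ)))
    rw [hge, pd_const_add, h1, h2,
      pd_sum a (fun σ => pd_smooth b (pd_smooth c (hFσ σ))) 0]
    refine Finset.sum_congr rfl (fun σ _ => ?_)
    exact key a b c (pd_smooth p (hf σ)) (pd_smooth q (hf σ)) (hdf σ p) (hdf σ q)
  rw [g3 i k n j l, g3 j l n i k, g3 i l n j k, g3 j k n i l,
    ← Finset.sum_add_distrib, ← Finset.sum_sub_distrib, ← Finset.sum_sub_distrib,
    Finset.sum_div]
  refine Finset.sum_congr rfl (fun σ _ => ?_)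
  simp only [hΨ, hΨ₁]
  exact alg (fun a b => pd a (pd b (f σ)) 0) (fun a b c => pd a (pd b (pd c (f σ))) 0)
    (fun a b => pd_comm a b (hf σ) 0)
    (fun a b c => pd_comm a b (pd_smooth c (hf σ)) 0)
    (fun a b c => congrFun (congrArg (pd a) (funext fun x => pd_comm b c (hf σ) x)) 0)
    i j k l n
end
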